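/- Let β be a countable (or measurable) type, let n be a positive natural number, and let C : Fin (2*n) → PMF β be a family of probability distributions on β. Let P₀ be the product distribution on Fin n → β whose i-th coordinate is drawn independently from C i (embedding Fin n into the first n indices of Fin (2n)), and let P₁ be the product distribution whose i-th coordinate is drawn independently from C (n + i). Suppose D : (Fin n → β) → PMF Bool is a randomized distinguisher with |Pr_{v ← P₀}[D v = true] − Pr_{v ← P₁}[D v = true]| ≥ ε. Then there exist indices x, y : Fin (2*n) with x ≠ y and a randomized algorithm D' : β → PMF Bool such that |Pr_{c ← C x}[D' c = true] − Pr_{c ← C y}[D' c = true]| ≥ ε / n. (This is the information-theoretic content of Lemma 'list_of_hardness': a distinguisher between the list of commitments to the values 1,…,n and the list of commitments to n+1,…,2n yields a distinguisher between two individual commitment distributions with advantage ε/n.) -/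
import Mathlib


open scoped ENNReal

/-- The product distribution on `Fin n → β` whose `i`-th coordinate is drawn
independently from `C i`, built by iterated monadic binds. -/
noncomputable def pmfPi {β : Type} : ∀ {n : ℕ}, (Fin n → PMF β) → PMF (Fin n → β)
  | 0, _ => PMF.pure (fun i => i.elim0)
  | _ + 1, C =>
      (C 0).bind fun x => (pmfPi fun i => C i.succ).bind fun f => PMF.pure (Fin.cons x f)

/-- The probability that the randomized algorithm `A` outputs `true` on an input
sampled from `Q`, as a real number. -/
noncomputable def prTrue {α : Type} (Q : PMF α) (A : α → PMF Bool) : ℝ :=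
  ((Q.bind A) true).toReal

lemma pmfPi_succ {β : Type} {m : ℕ} (C : Fin (m + 1) → PMF β) :
    pmfPi C = (C 0).bind fun x => (pmfPi fun i => C i.succ).bind fun f =>
      PMF.pure (Fin.cons x f) := rfl

lemma insertNth_succ_cons {β : Type} {m : ℕ} (i : Fin (m + 1)) (c x : β) (f : Fin m → β) :
    Fin.insertNth (α := fun _ => β) i.succ c (Fin.cons x f) = Fin.cons x (Fin.insertNth i c f) := by
  funext k
  induction k using Fin.cases with
  | zero =>
    have h0 : (0 : Fin (m + 2)) = i.succ.succAbove 0 := (Fin.succ_succAbove_zero i).symm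
    rw [h0, Fin.insertNth_apply_succAbove]
    simp
  | succ k =>
    rcases eq_or_ne k i with rfl | hk
    · simp [Fin.insertNth_apply_same]
    · obtain ⟨j, rfl⟩ : ∃ j, i.succAbove j = k := by
        rcases Fin.exists_succAbove_eq hk with ⟨j, hj⟩; exact ⟨j, hj⟩
      rw [← Fin.succ_succAbove_succ, Fin.insertNth_apply_succAbove]
      simp [Fin.insertNth_apply_succAbove]

lemma pmfPi_extract {β : Type} : ∀ {m : ℕ} (A : Fin (m + 1) → PMF β) (j : Fin (m + 1))
    (g : (Fin (m + 1) → β) → PMF Bool),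
    (pmfPi A).bind g =
      (A j).bind fun c => (pmfPi fun i => A (j.succAbove i)).bind fun f =>
        g (Fin.insertNth j c f) := by
  intro m
  induction m with
  | zero =>
    intro A j g
    have hj : j = 0 := Fin.fin_one_eq_zero j
    subst hj
    simp only [pmfPi, PMF.bind_bind, PMF.pure_bind, Fin.succAbove_zero, Fin.insertNth_zero']
  | succ m ih =>
    intro A j g
    induction j using Fin.cases with
    | zero =>
      rw [pmfPi_succ]
      simp only [PMF.bind_bind, PMF.pure_bind, Fin.succAbove_zero, Fin.insertNth_zero']
    | succ i =>
      rw [pmfPi_succ]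
      simp only [PMF.bind_bind, PMF.pure_bind]
      have step : ∀ x, ((pmfPi fun k => A k.succ).bind fun f => g (Fin.cons x f)) =
          (A i.succ).bind fun c => (pmfPi fun k => A ((i.succAbove k)).succ).bind fun f =>
            g (Fin.cons x (Fin.insertNth i c f)) :=
        fun x => ih (fun k => A k.succ) i (fun f => g (Fin.cons x f))
      simp only [step]
      rw [PMF.bind_comm]
      congr 1
      funext c
      rw [pmfPi_succ]
      simp only [PMF.bind_bind, PMF.pure_bind, Fin.succ_succAbove_zero,
        Fin.succ_succAbove_succ, insertNth_succ_cons]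

/-- Information-theoretic content of Lemma `list_of_hardness`: a distinguisher with
advantage `ε` between the product of the first `n` distributions `C 0, …, C (n-1)`
and the product of the last `n` distributions `C n, …, C (2n-1)` yields a
distinguisher between two individual distributions `C x` and `C y` with advantage
`ε / n`. -/
theorem list_of_hardness {β : Type} (n : ℕ) (hn : 0 < n) (ε : ℝ)
    (C : Fin (2 * n) → PMF β) (D : (Fin n → β) → PMF Bool)
    (h : |prTrue (pmfPi fun i : Fin n => C ⟨i, by omega⟩) D -
          prTrue (pmfPi fun i : Fin n => C ⟨n + i, by omega⟩) D| ≥ ε) :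
    ∃ (x y : Fin (2 * n)) (D' : β → PMF Bool), x ≠ y ∧
      |prTrue (C x) D' - prTrue (C y) D'| ≥ ε / n := by
  classical
  -- the hybrid families
  set Hfam : ℕ → Fin n → PMF β := fun k i =>
    if (i : ℕ) < k then C ⟨n + i, by omega⟩ else C ⟨i, by omega⟩ with hHfam
  set h' : ℕ → ℝ := fun k => prTrue (pmfPi (Hfam k)) D with hh'
  have h0 : h' 0 = prTrue (pmfPi fun i : Fin n => C ⟨i, by omega⟩) D := by
    simp only [hh', hHfam, Nat.not_lt_zero, if_false]
  have hN : h' n = prTrue (pmfPi fun i : Fin n => C ⟨n + i, by omega⟩) D := by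
    have : Hfam n = fun i : Fin n => C ⟨n + i, by omega⟩ := by
      funext i; simp [hHfam, i.isLt]
    show prTrue (pmfPi (Hfam n)) D = _
    rw [this]
  -- telescoping: some adjacent pair differs by at least ε / n
  have key : ∃ k, k < n ∧ ε / n ≤ |h' k - h' (k + 1)| := by
    by_contra hc
    push_neg at hc
    have htel : h' 0 - h' n = ∑ k ∈ Finset.range n, (h' k - h' (k + 1)) :=
      (Finset.sum_range_sub' h' n).symm
    have hle : |h' 0 - h' n| ≤ ∑ k ∈ Finset.range n, |h' k - h' (k + 1)| := by
      rw [htel]; exact Finset.abs_sum_le_sum_abs _ _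
    have hlt : ∑ k ∈ Finset.range n, |h' k - h' (k + 1)| < ∑ _k ∈ Finset.range n, ε / n :=
      Finset.sum_lt_sum_of_nonempty (Finset.nonempty_range_iff.mpr hn.ne')
        (fun k hk => hc k (Finset.mem_range.mp hk))
    have hsum : ∑ _k ∈ Finset.range n, ε / n = ε := by
      rw [Finset.sum_const, Finset.card_range, nsmul_eq_mul]
      field_simp
    rw [h0, hN] at hle
    rw [hsum] at hlt
    linarith [le_trans h hle]
  obtain ⟨k, hk, hdiff⟩ := key
  obtain ⟨m, rfl⟩ : ∃ m, n = m + 1 := ⟨n - 1, by omega⟩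
  set j : Fin (m + 1) := ⟨k, hk⟩ with hj
  refine ⟨⟨k, by omega⟩, ⟨(m + 1) + k, by omega⟩,
    fun c => (pmfPi fun i => Hfam k (j.succAbove i)).bind fun f => D (Fin.insertNth j c f),
    Fin.ne_of_val_ne (show k ≠ (m + 1) + k by omega), ?_⟩
  have hoff : (fun i => Hfam (k + 1) (j.succAbove i)) = fun i => Hfam k (j.succAbove i) := by
    funext i
    have hne : ((j.succAbove i : Fin (m + 1)) : ℕ) ≠ k := by
      intro hh
      exact j.succAbove_ne i (Fin.ext hh)
    simp only [hHfam]
    by_cases hlt : ((j.succAbove i : Fin (m + 1)) : ℕ) < k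
    · rw [if_pos hlt, if_pos (by omega)]
    · rw [if_neg hlt, if_neg (by omega)]
  have hAj : Hfam k j = C ⟨k, by omega⟩ := by simp [hHfam, hj]
  have hBj : Hfam (k + 1) j = C ⟨(m + 1) + k, by omega⟩ := by simp [hHfam, hj]
  have e1 : h' k = prTrue (C ⟨k, by omega⟩)
      (fun c => (pmfPi fun i => Hfam k (j.succAbove i)).bind fun f =>
        D (Fin.insertNth j c f)) := by
    simp only [hh', prTrue]
    rw [pmfPi_extract (Hfam k) j D, hAj]
  have e2 : h' (k + 1) = prTrue (C ⟨(m + 1) + k, by omega⟩)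
      (fun c => (pmfPi fun i => Hfam k (j.succAbove i)).bind fun f =>
        D (Fin.insertNth j c f)) := by
    simp only [hh', prTrue]
    rw [pmfPi_extract (Hfam (k + 1)) j D, hBj, hoff]
  rw [← e1, ← e2]
  exact hdiff
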